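/- arXiv:1107.4134 — 3 statements merged into one kernel-verified Lean document; each statement's English description precedes it below -/
import Mathlib

section
/- Let ω ∈ ℝ^d be badly approximable, satisfying ‖m·ω‖ ≥ K/|m|_∞^d for all nonzero m ∈ ℤ^d, and let R ⊆ B where B is a closed ball of radius r_max in the infinity norm. Then for any 2 ≤ i ≤ D(t) and all t > 0, consecutive distinct spacings satisfy Δ_i(t) − Δ_{i−1}(t) ≥ K/(4·r_max·t)^d. -/
open scoped BigOperators Pointwise

/-- Distance from a real number to the nearest integer. -/
noncomputable def distInt (θ : ℝ) : ℝ := |θ - round θ|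

/-- Euclidean norm of an integer vector. -/
noncomputable def eNorm {d : ℕ} (m : Fin d → ℤ) : ℝ := Real.sqrt (∑ i, ((m i : ℝ)) ^ 2)

/-- The fractional parts `{m · ω}` for lattice points `m` in the dilate `t • R`. -/
def fracPts {d : ℕ} (ω : Fin d → ℝ) (R : Set (Fin d → ℝ)) (t : ℝ) : Set ℝ :=
  {y | ∃ m : Fin d → ℤ, (fun i => (m i : ℝ)) ∈ t • R ∧ y = Int.fract (∑ i, (m i : ℝ) * ω i)}

/-- The set of distinct spacings: differences `y - x` between consecutive points
of `fracPts ω R t`. -/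
def spacings {d : ℕ} (ω : Fin d → ℝ) (R : Set (Fin d → ℝ)) (t : ℝ) : Set ℝ :=
  {g | ∃ x ∈ fracPts ω R t, ∃ y ∈ fracPts ω R t, x < y ∧
      (∀ z ∈ fracPts ω R t, ¬ (x < z ∧ z < y)) ∧ g = y - x}

/-- Sup norm of an integer vector. -/
noncomputable def supNorm {d : ℕ} (m : Fin d → ℤ) : ℝ := ‖(fun i => (m i : ℝ) : Fin d → ℝ)‖

/-!
Write two spacings as `g = {m₂·ω} - {m₁·ω}` and `g' = {m₄·ω} - {m₃·ω}`. Then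
`n = m₄ - m₃ - m₂ + m₁` satisfies `n·ω ≡ g' - g (mod 1)` with `0 < g' - g < 1`, so `n ≠ 0` and
`‖n·ω‖ ≤ g' - g`. All four `mᵢ` lie in the sup-norm ball `t • B` of radius `t rmax`, hence
`|n|_∞ ≤ 4 rmax t`, and the Diophantine condition gives `‖n·ω‖ ≥ K / (4 rmax t)^d`.
-/

lemma distInt_le_fract (θ : ℝ) : distInt θ ≤ Int.fract θ := by
  rw [distInt, abs_sub_round_eq_min]
  exact min_le_left _ _

lemma Int.fract_sub_sub_add {a b c e : ℝ}
    (h0 : 0 ≤ Int.fract e - Int.fract c - (Int.fract b - Int.fract a))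
    (h1 : Int.fract e - Int.fract c - (Int.fract b - Int.fract a) < 1) :
    Int.fract (e - c - b + a) = Int.fract e - Int.fract c - (Int.fract b - Int.fract a) := by
  refine Int.fract_eq_iff.mpr ⟨h0, h1, ⌊e⌋ - ⌊c⌋ - ⌊b⌋ + ⌊a⌋, ?_⟩
  simp only [Int.fract]
  push_cast
  ring

section Lattice

variable {d : ℕ}

lemma supNorm_pos {m : Fin d → ℤ} (hm : m ≠ 0) : 0 < supNorm m := by
  refine norm_pos_iff.mpr fun h => hm (funext fun i => ?_)
  simpa using congrFun h i

lemma supNorm_add_le (m n : Fin d → ℤ) : supNorm (m + n) ≤ supNorm m + supNorm n := by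
  have hcast : (fun i => ((m + n) i : ℝ)) = (fun i => (m i : ℝ)) + fun i => (n i : ℝ) := by
    ext i
    simp
  rw [supNorm, hcast]
  exact norm_add_le _ _

lemma supNorm_sub_le_of_mem_closedBall {m n : Fin d → ℤ} {c : Fin d → ℝ} {ρ : ℝ}
    (hm : (fun i => (m i : ℝ)) ∈ Metric.closedBall c ρ)
    (hn : (fun i => (n i : ℝ)) ∈ Metric.closedBall c ρ) :
    supNorm (m - n) ≤ 2 * ρ := by
  have hdist : supNorm (m - n) = dist (fun i => (m i : ℝ)) (fun i => (n i : ℝ)) := by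
    rw [dist_eq_norm, supNorm]
    congr 1
    ext i
    simp
  rw [Metric.mem_closedBall] at hm hn
  linarith [dist_triangle_right (fun i => (m i : ℝ)) (fun i => (n i : ℝ)) c]

lemma mem_closedBall_of_mem_smul {R : Set (Fin d → ℝ)} {b x : Fin d → ℝ} {r t : ℝ} (ht : 0 < t)
    (hRB : R ⊆ Metric.closedBall b r) (hx : x ∈ t • R) :
    x ∈ Metric.closedBall (t • b) (t * r) := by
  have hx' := Set.smul_set_mono hRB hx
  rwa [smul_closedBall' ht.ne', Real.norm_of_nonneg ht.le] at hx'

lemma sum_intCast_mul_sub_sub_add (ω : Fin d → ℝ) (m₁ m₂ m₃ m₄ : Fin d → ℤ) :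
    ∑ i, ((m₄ - m₃ - m₂ + m₁) i : ℝ) * ω i =
      ∑ i, (m₄ i : ℝ) * ω i - ∑ i, (m₃ i : ℝ) * ω i - ∑ i, (m₂ i : ℝ) * ω i +
        ∑ i, (m₁ i : ℝ) * ω i := by
  simp only [Pi.add_apply, Pi.sub_apply, Int.cast_add, Int.cast_sub, add_mul, sub_mul,
    Finset.sum_add_distrib, Finset.sum_sub_distrib]

end Lattice

section Spacings

variable {d : ℕ} {ω : Fin d → ℝ} {R : Set (Fin d → ℝ)} {t : ℝ}

lemma exists_of_mem_spacings {g : ℝ} (hg : g ∈ spacings ω R t) :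
    ∃ m₁ m₂ : Fin d → ℤ, (fun i => (m₁ i : ℝ)) ∈ t • R ∧ (fun i => (m₂ i : ℝ)) ∈ t • R ∧
      0 < g ∧ g = Int.fract (∑ i, (m₂ i : ℝ) * ω i) - Int.fract (∑ i, (m₁ i : ℝ) * ω i) := by
  obtain ⟨_, ⟨m₁, hm₁, rfl⟩, _, ⟨m₂, hm₂, rfl⟩, hlt, -, rfl⟩ := hg
  exact ⟨m₁, m₂, hm₁, hm₂, sub_pos.mpr hlt, rfl⟩

lemma exists_small_vector_of_lt_of_mem_spacings {b : Fin d → ℝ} {r g g' : ℝ} (ht : 0 < t)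
    (hRB : R ⊆ Metric.closedBall b r) (hg : g ∈ spacings ω R t) (hg' : g' ∈ spacings ω R t)
    (hlt : g < g') :
    ∃ n : Fin d → ℤ, n ≠ 0 ∧ supNorm n ≤ 4 * r * t ∧
      distInt (∑ i, (n i : ℝ) * ω i) ≤ g' - g := by
  obtain ⟨m₁, m₂, hm₁, hm₂, hgpos, hg⟩ := exists_of_mem_spacings hg
  obtain ⟨m₃, m₄, hm₃, hm₄, -, hg'⟩ := exists_of_mem_spacings hg'
  have hfract : Int.fract (∑ i, ((m₄ - m₃ - m₂ + m₁) i : ℝ) * ω i) = g' - g := by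
    rw [sum_intCast_mul_sub_sub_add, hg, hg']
    exact Int.fract_sub_sub_add (by linarith)
      (by linarith [Int.fract_lt_one (∑ i, (m₄ i : ℝ) * ω i),
        Int.fract_nonneg (∑ i, (m₃ i : ℝ) * ω i)])
  refine ⟨m₄ - m₃ - m₂ + m₁, fun h0 => ?_, ?_, hfract ▸ distInt_le_fract _⟩
  · simp only [h0, Pi.zero_apply, Int.cast_zero, zero_mul, Finset.sum_const_zero,
      Int.fract_zero] at hfract
    linarith
  · have hball {m : Fin d → ℤ} (hm : (fun i => (m i : ℝ)) ∈ t • R) :=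
      mem_closedBall_of_mem_smul ht hRB hm
    calc supNorm (m₄ - m₃ - m₂ + m₁) = supNorm ((m₄ - m₃) + (m₁ - m₂)) := by
          congr 1; abel
      _ ≤ supNorm (m₄ - m₃) + supNorm (m₁ - m₂) := supNorm_add_le _ _
      _ ≤ 2 * (t * r) + 2 * (t * r) := add_le_add
          (supNorm_sub_le_of_mem_closedBall (hball hm₄) (hball hm₃))
          (supNorm_sub_le_of_mem_closedBall (hball hm₁) (hball hm₂))
      _ = 4 * r * t := by ring

end Spacings

theorem spacing_difference_lower_bound_general {d : ℕ} (ω : Fin d → ℝ)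
    (R : Set (Fin d → ℝ))
    (rmax : ℝ) (b : Fin d → ℝ)
    (hRB : R ⊆ Metric.closedBall b rmax)
    (K : ℝ) (hK : 0 < K)
    (hBA : ∀ m : Fin d → ℤ, m ≠ 0 → K / supNorm m ^ d ≤ distInt (∑ i, (m i : ℝ) * ω i)) :
    ∀ t : ℝ, 0 < t → ∀ g ∈ spacings ω R t, ∀ g' ∈ spacings ω R t,
      g < g' → K / (4 * rmax * t) ^ d ≤ g' - g := by
  intro t ht g hg g' hg' hlt
  obtain ⟨n, hn0, hnorm, hdist⟩ := exists_small_vector_of_lt_of_mem_spacings ht hRB hg hg' hlt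
  have hnpos := supNorm_pos hn0
  calc K / (4 * rmax * t) ^ d ≤ K / supNorm n ^ d :=
        div_le_div_of_nonneg_left hK.le (pow_pos hnpos d) (pow_le_pow_left₀ hnpos.le hnorm d)
    _ ≤ distInt (∑ i, (n i : ℝ) * ω i) := hBA n hn0
    _ ≤ g' - g := hdist

theorem spacing_difference_lower_bound {d : ℕ} (hd : 1 ≤ d) (ω : Fin d → ℝ)
    (hindep : LinearIndependent ℚ (Fin.cons (1 : ℝ) ω))
    (R : Set (Fin d → ℝ)) (hconv : Convex ℝ R) (hbdd : Bornology.IsBounded R)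
    (rmax : ℝ) (hrmax : 0 < rmax) (b : Fin d → ℝ)
    (hRB : R ⊆ Metric.closedBall b rmax)
    (K : ℝ) (hK : 0 < K)
    (hBA : ∀ m : Fin d → ℤ, m ≠ 0 → K / supNorm m ^ d ≤ distInt (∑ i, (m i : ℝ) * ω i)) :
    ∀ t : ℝ, 0 < t → ∀ g ∈ spacings ω R t, ∀ g' ∈ spacings ω R t,
      g < g' → K / (4 * rmax * t) ^ d ≤ g' - g :=
  spacing_difference_lower_bound_general ω R rmax b hRB K hK hBA
end

section
/- Let Ω be a bounded convex region in ℝ² with nonempty interior. Then the map F sending a vector v ∈ ℝ² to the translated set Ω + v = {x + v : x ∈ Ω} is Lipschitz from (ℝ², |·|_∞) to subsets of ℝ² equipped with the distance d(S,T) = area(S △ T): there exists a constant C > 0 such that area((Ω + v₁) △ (Ω + v₂)) ≤ C·|v₁ − v₂|_∞ for all v₁, v₂ ∈ ℝ². -/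
/-!
If `closedBall x₀ r ⊆ Ω` with `Ω` convex and `t = ‖w‖ / r ≤ 1`, then the image of `Ω` under the
homothety of centre `x₀` and ratio `1 - t` lies in both `Ω` and `Ω + w`. Hence
`μ (Ω \ (Ω + w)) ≤ (1 - (1 - t) ^ n) μ Ω ≤ n t μ Ω` by Bernoulli's inequality, and the symmetric
difference of two translates is, up to translation, the union of two such differences.
-/

open MeasureTheory Metric Module Set

section Translation

variable {G : Type*} [AddGroup G] [MeasurableSpace G] [MeasurableAdd G]
  (μ : Measure G) [μ.IsAddRightInvariant]

theorem measure_image_add_right (a : G) (s : Set G) : μ ((· + a) '' s) = μ s := by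
  rw [image_add_right, measure_preimage_add_right]

theorem measure_symmDiff_image_add_right_le (Ω : Set G) (v₁ v₂ : G) :
    μ (symmDiff ((· + v₁) '' Ω) ((· + v₂) '' Ω)) ≤
      μ (Ω \ (· + (v₂ - v₁)) '' Ω) + μ (Ω \ (· + (v₁ - v₂)) '' Ω) := by
  have h (a b : G) : (· + a) '' Ω \ (· + b) '' Ω = (· + a) '' (Ω \ (· + (b - a)) '' Ω) := by
    simp only [image_sdiff (add_left_injective a), image_image, add_assoc, sub_add_cancel]
  rw [symmDiff_def, h, h]
  refine (measure_union_le _ _).trans_eq ?_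
  rw [measure_image_add_right, measure_image_add_right]

end Translation

section Homothety

open AffineMap

variable {E : Type*} [NormedAddCommGroup E] [NormedSpace ℝ E] {Ω : Set E} {x₀ w : E} {r t : ℝ}

theorem Convex.image_homothety_subset (hΩ : Convex ℝ Ω) (hx₀ : x₀ ∈ Ω) (ht₀ : 0 ≤ t)
    (ht₁ : t ≤ 1) : homothety x₀ (1 - t) '' Ω ⊆ Ω := by
  rintro _ ⟨x, hx, rfl⟩
  rw [homothety_eq_lineMap]
  exact hΩ.lineMap_mem hx₀ hx ⟨by linarith, by linarith⟩

theorem Convex.image_homothety_subset_image_add_right (hΩ : Convex ℝ Ω)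
    (hball : closedBall x₀ r ⊆ Ω) (ht₀ : 0 < t) (ht₁ : t ≤ 1) (hw : ‖w‖ ≤ t * r) :
    homothety x₀ (1 - t) '' Ω ⊆ (· + w) '' Ω := by
  rintro _ ⟨x, hx, rfl⟩
  have hy : x₀ - t⁻¹ • w ∈ Ω := hball <| by
    rw [mem_closedBall, dist_eq_norm, sub_sub_cancel_left, norm_neg, norm_smul, norm_inv,
      Real.norm_of_nonneg ht₀.le, inv_mul_le_iff₀ ht₀]
    exact hw
  refine ⟨lineMap (x₀ - t⁻¹ • w) x (1 - t), hΩ.lineMap_mem hy hx ⟨by linarith, by linarith⟩, ?_⟩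
  simp only [lineMap_apply_module, homothety_apply, vsub_eq_sub, vadd_eq_add]
  match_scalars <;> field_simp <;> ring

end Homothety

section Haar

open AffineMap

variable {E : Type*} [NormedAddCommGroup E] [NormedSpace ℝ E] [MeasurableSpace E] [BorelSpace E]
  [FiniteDimensional ℝ E] (μ : Measure E) [μ.IsAddHaarMeasure] {Ω : Set E} {x₀ : E} {r t : ℝ}

theorem Convex.measure_sdiff_image_homothety_le (hΩ : Convex ℝ Ω) (hx₀ : x₀ ∈ Ω)
    (ht₀ : 0 ≤ t) (ht₁ : t ≤ 1) (hΩfin : μ Ω ≠ ⊤) :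
    μ (Ω \ homothety x₀ (1 - t) '' Ω) ≤ ENNReal.ofReal (finrank ℝ E * t) * μ Ω := by
  have hsub := hΩ.image_homothety_subset hx₀ ht₀ ht₁
  have bernoulli : 1 ≤ finrank ℝ E * t + (1 - t) ^ finrank ℝ E := by
    have := one_add_mul_le_pow (a := -t) (by linarith) (finrank ℝ E)
    rw [← sub_eq_add_neg] at this
    linarith
  rw [measure_sdiff hsub ((hΩ.affine_image _).nullMeasurableSet μ)
      (ne_top_of_le_ne_top hΩfin (measure_mono hsub)), Measure.addHaar_image_homothety,
    abs_of_nonneg (pow_nonneg (by linarith) _), tsub_le_iff_right, ← add_mul,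
    ← ENNReal.ofReal_add (by positivity) (pow_nonneg (by linarith) _)]
  exact le_mul_of_one_le_left zero_le (ENNReal.one_le_ofReal.2 bernoulli)

theorem Convex.measure_sdiff_image_add_right_le (hΩ : Convex ℝ Ω) (hball : closedBall x₀ r ⊆ Ω)
    (hr : 0 < r) (hΩfin : μ Ω ≠ ⊤) (w : E) :
    μ (Ω \ (· + w) '' Ω) ≤ ENNReal.ofReal (finrank ℝ E * ‖w‖ / r) * μ Ω := by
  rcases eq_or_ne w 0 with rfl | hw
  · simp
  by_cases hwr : ‖w‖ ≤ r
  · have ht₀ : 0 < ‖w‖ / r := div_pos (norm_pos_iff.2 hw) hr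
    have ht₁ : ‖w‖ / r ≤ 1 := (div_le_one hr).2 hwr
    calc μ (Ω \ (· + w) '' Ω) ≤ μ (Ω \ homothety x₀ (1 - ‖w‖ / r) '' Ω) :=
          measure_mono <| sdiff_subset_sdiff_right <|
            hΩ.image_homothety_subset_image_add_right hball ht₀ ht₁ (div_mul_cancel₀ _ hr.ne').ge
      _ ≤ ENNReal.ofReal (finrank ℝ E * (‖w‖ / r)) * μ Ω :=
          hΩ.measure_sdiff_image_homothety_le μ (hball (mem_closedBall_self hr.le)) ht₀.le ht₁ hΩfin
      _ = ENNReal.ofReal (finrank ℝ E * ‖w‖ / r) * μ Ω := by rw [mul_div_assoc]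
  · have : Nontrivial E := ⟨⟨w, 0, hw⟩⟩
    have hn : (1 : ℝ) ≤ finrank ℝ E := Nat.one_le_cast.2 finrank_pos
    have : 1 ≤ finrank ℝ E * ‖w‖ / r := by
      rw [le_div_iff₀ hr, one_mul]
      nlinarith
    exact (measure_mono sdiff_subset).trans
      (le_mul_of_one_le_left zero_le (ENNReal.one_le_ofReal.2 this))

end Haar

theorem translation_lipschitz_area (Ω : Set (Fin 2 → ℝ))
    (hconv : Convex ℝ Ω) (hbdd : Bornology.IsBounded Ω)
    (hint : (interior Ω).Nonempty) :
    ∃ C : ℝ, 0 < C ∧ ∀ v₁ v₂ : Fin 2 → ℝ,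
      volume (symmDiff ((fun x => x + v₁) '' Ω) ((fun x => x + v₂) '' Ω)) ≤
        ENNReal.ofReal (C * ‖v₁ - v₂‖) := by
  obtain ⟨x₀, hx₀⟩ := hint
  obtain ⟨r, hr, hball⟩ := nhds_basis_closedBall.mem_iff.1 (mem_interior_iff_mem_nhds.1 hx₀)
  have hfin : volume Ω ≠ ⊤ := hbdd.measure_lt_top.ne
  have hpos : 0 < (volume Ω).toReal :=
    ENNReal.toReal_pos (Measure.measure_pos_of_nonempty_interior _ ⟨x₀, hx₀⟩).ne' hfin
  have hdim : finrank ℝ (Fin 2 → ℝ) = 2 := by simp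
  refine ⟨4 * (volume Ω).toReal / r, by positivity, fun v₁ v₂ => ?_⟩
  have hdiff := hconv.measure_sdiff_image_add_right_le volume hball hr hfin
  calc volume (symmDiff ((· + v₁) '' Ω) ((· + v₂) '' Ω))
      ≤ volume (Ω \ (· + (v₂ - v₁)) '' Ω) + volume (Ω \ (· + (v₁ - v₂)) '' Ω) :=
        measure_symmDiff_image_add_right_le volume Ω v₁ v₂
    _ ≤ ENNReal.ofReal (2 * ‖v₁ - v₂‖ / r) * volume Ω
        + ENNReal.ofReal (2 * ‖v₁ - v₂‖ / r) * volume Ω := by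
        gcongr
        · simpa [hdim, norm_sub_rev] using hdiff (v₂ - v₁)
        · simpa [hdim] using hdiff (v₁ - v₂)
    _ = ENNReal.ofReal (4 * (volume Ω).toReal / r * ‖v₁ - v₂‖) := by
        rw [← add_mul, ← ENNReal.ofReal_add (by positivity) (by positivity),
          ← ENNReal.ofReal_toReal hfin, ← ENNReal.ofReal_mul (by positivity),
          ENNReal.toReal_ofReal ENNReal.toReal_nonneg]
        ring_nf
end

section
/- Let τ ∈ ℝ be Diophantine with exponent κ, meaning there is K₀ > 0 with |m + nτ| ≥ K₀/|(m,n)|^κ for all nonzero (m,n) ∈ ℤ². Then there exists a set Λ ⊆ [0,1] of full Lebesgue measure such that for every α ∈ Λ and every γ > max(3, κ), the pair (τ, α) is Diophantine with exponent γ: there exists K > 0 such that |m + nτ + pα| ≥ K/|(m,n,p)|^γ for all nonzero integer vectors (m,n,p) ∈ ℤ³, where |·| denotes the Euclidean norm. -/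
/-!
Fix `g > 3`, `0 < ε ≤ 1` and `x = (n, p) ∈ ℤ²` with `p ≠ 0`, and write `‖x‖ = max |n| |p|`.
The `α ∈ [0, 1]` with `|m + nτ + pα| < ε / |(m, n, p)| ^ g` lie in intervals of length
`≤ 2ε / ‖x‖ ^ g`, and only the `O(‖x‖)` integers `m` with `|m| ≤ |n||τ| + |p| + 1` contribute.
Summing `ε ‖x‖ ^ (1 - g)` over `x ∈ ℤ²` converges precisely because `g - 1 > 2`, so these `α`
have measure `O(ε)`; letting `ε → 0` and taking the union over a sequence `g ↓ max 3 κ` gives a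
null exceptional set. Outside it, vectors with `p ≠ 0` are handled by the constant `ε`, and those
with `p = 0` by the Diophantine condition on `τ`.
-/

open MeasureTheory Set Filter
open scoped ENNReal Topology

namespace DiophantinePair

noncomputable def tripleNorm (m n p : ℤ) : ℝ := √((m : ℝ) ^ 2 + (n : ℝ) ^ 2 + (p : ℝ) ^ 2)

lemma one_le_tripleNorm {m n p : ℤ} (h : ¬(m = 0 ∧ n = 0 ∧ p = 0)) : 1 ≤ tripleNorm m n p := by
  have hsum : (1 : ℤ) ≤ m ^ 2 + n ^ 2 + p ^ 2 := by
    rcases (by tauto : m ≠ 0 ∨ n ≠ 0 ∨ p ≠ 0) with h | h | h <;>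
      linarith [sq_pos_of_ne_zero h, sq_nonneg m, sq_nonneg n, sq_nonneg p]
  rw [tripleNorm, Real.one_le_sqrt]
  exact_mod_cast hsum

lemma norm_le_tripleNorm (m : ℤ) (x : Fin 2 → ℤ) : ‖x‖ ≤ tripleNorm m (x 0) (x 1) := by
  refine (pi_norm_le_iff_of_nonneg (Real.sqrt_nonneg _)).2 (Fin.forall_fin_two.2 ⟨?_, ?_⟩) <;>
    rw [Int.norm_eq_abs] <;> apply Real.abs_le_sqrt <;>
    nlinarith [sq_nonneg (m : ℝ), sq_nonneg (x 0 : ℝ), sq_nonneg (x 1 : ℝ)]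

lemma volume_abs_add_mul_lt (c r : ℝ) {a : ℝ} (ha : a ≠ 0) :
    volume {α : ℝ | |c + a * α| < r} = ENNReal.ofReal (2 * (r / |a|)) := by
  have hball : {α : ℝ | |c + a * α| < r} = Metric.ball (-(c / a)) (r / |a|) := by
    ext α
    rw [mem_ofPred_eq, Metric.mem_ball, Real.dist_eq, sub_neg_eq_add,
      lt_div_iff₀ (abs_pos.2 ha), ← abs_mul, add_mul, div_mul_cancel₀ c ha, add_comm, mul_comm]
  rw [hball, Real.volume_ball]

def approxSet (τ g ε : ℝ) (m n p : ℤ) : Set ℝ :=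
  {α ∈ Icc 0 1 | |(m : ℝ) + n * τ + p * α| < ε / tripleNorm m n p ^ g}

def badSet (τ g ε : ℝ) : Set ℝ := ⋃ (m : ℤ) (n : ℤ) (p : ℤ) (_ : p ≠ 0), approxSet τ g ε m n p

variable {τ g ε : ℝ} {m n p : ℤ}

lemma abs_le_of_mem_approxSet (hp : p ≠ 0) (hg : 0 ≤ g) (hε : ε ≤ 1) {α : ℝ}
    (hα : α ∈ approxSet τ g ε m n p) : |(m : ℝ)| ≤ |(n : ℝ)| * |τ| + |(p : ℝ)| + 1 := by
  obtain ⟨⟨hα0, hα1⟩, hlt⟩ := hα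
  have hsmall : |(m : ℝ) + n * τ + p * α| < 1 := by
    have hv : 1 ≤ tripleNorm m n p ^ g := Real.one_le_rpow (one_le_tripleNorm (by tauto)) hg
    exact hlt.trans_le (div_le_one_of_le₀ (hε.trans hv) (zero_le_one.trans hv))
  have hpα : |(p : ℝ) * α| ≤ |(p : ℝ)| := by
    rw [abs_mul, abs_of_nonneg hα0]
    exact mul_le_of_le_one_right (abs_nonneg _) hα1
  calc |(m : ℝ)| = |((m : ℝ) + n * τ + p * α) + -(n * τ) + -(p * α)| := by ring_nf
    _ ≤ |(m : ℝ) + n * τ + p * α| + |-((n : ℝ) * τ)| + |-((p : ℝ) * α)| := abs_add_three _ _ _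
    _ ≤ |(n : ℝ)| * |τ| + |(p : ℝ)| + 1 := by rw [abs_neg, abs_neg, abs_mul (n : ℝ)]; linarith

lemma volume_approxSet_le (hp : p ≠ 0) (hg : 0 ≤ g) (hε : 0 ≤ ε) {M : ℝ} (hM : 0 < M)
    (hMv : M ≤ tripleNorm m n p) :
    volume (approxSet τ g ε m n p) ≤ ENNReal.ofReal (2 * ε / M ^ g) := by
  have hp1 : (1 : ℝ) ≤ |(p : ℝ)| := by exact_mod_cast Int.one_le_abs hp
  have hsub : approxSet τ g ε m n p ⊆
      {α | |((m : ℝ) + n * τ) + p * α| < ε / tripleNorm m n p ^ g} := fun α hα => hα.2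
  refine (measure_mono hsub).trans ?_
  rw [volume_abs_add_mul_lt _ _ (Int.cast_ne_zero.2 hp), mul_div_assoc]
  refine ENNReal.ofReal_le_ofReal (mul_le_mul_of_nonneg_left ?_ zero_le_two)
  calc ε / tripleNorm m n p ^ g / |(p : ℝ)| ≤ ε / tripleNorm m n p ^ g :=
      div_le_self (div_nonneg hε (Real.rpow_nonneg (Real.sqrt_nonneg _) _)) hp1
    _ ≤ ε / M ^ g := by gcongr

lemma tsum_int_le_of_support_bounded {f : ℤ → ℝ≥0∞} {c : ℝ≥0∞} {R : ℝ} (hR : 0 ≤ R)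
    (hf : ∀ m, f m ≤ c) (hsupp : ∀ m : ℤ, f m ≠ 0 → |(m : ℝ)| ≤ R) :
    ∑' m, f m ≤ ENNReal.ofReal (2 * R + 1) * c := by
  set M : ℕ := ⌊R⌋₊
  have hzero : ∀ m ∉ Finset.Icc (-(M : ℤ)) M, f m = 0 := by
    intro m hm
    by_contra hfm
    have hmR : (m.natAbs : ℝ) ≤ R := by
      rw [Nat.cast_natAbs, Int.cast_abs]; exact hsupp m hfm
    have := Nat.le_floor hmR
    exact hm (Finset.mem_Icc.2 ⟨by omega, by omega⟩)
  have hcard : ((Finset.Icc (-(M : ℤ)) M).card : ℝ) ≤ 2 * R + 1 := by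
    rw [Int.card_Icc, show (M : ℤ) + 1 - -(M : ℤ) = ((2 * M + 1 : ℕ) : ℤ) by push_cast; ring,
      Int.toNat_natCast]
    push_cast
    linarith [Nat.floor_le hR]
  calc ∑' m, f m = ∑ m ∈ Finset.Icc (-(M : ℤ)) M, f m := tsum_eq_sum hzero
    _ ≤ ∑ _m ∈ Finset.Icc (-(M : ℤ)) M, c := Finset.sum_le_sum fun m _ => hf m
    _ = (Finset.Icc (-(M : ℤ)) M).card * c := by rw [Finset.sum_const, nsmul_eq_mul]
    _ ≤ ENNReal.ofReal (2 * R + 1) * c := by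
      gcongr
      rw [← ENNReal.ofReal_natCast]
      exact ENNReal.ofReal_le_ofReal hcard

lemma tsum_volume_approxSet_le {x : Fin 2 → ℤ} (hx : x 1 ≠ 0) (hg : 0 ≤ g) (hε : 0 ≤ ε)
    (hε1 : ε ≤ 1) :
    ∑' m, volume (approxSet τ g ε m (x 0) (x 1)) ≤
      ENNReal.ofReal (2 * (2 * |τ| + 5) * ε * ‖x‖ ^ (1 - g)) := by
  have hn : |(x 0 : ℝ)| ≤ ‖x‖ := by simpa [Int.norm_eq_abs] using norm_le_pi_norm x 0
  have hp : |(x 1 : ℝ)| ≤ ‖x‖ := by simpa [Int.norm_eq_abs] using norm_le_pi_norm x 1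
  have hp1 : 1 ≤ |(x 1 : ℝ)| := by exact_mod_cast Int.one_le_abs hx
  have hx0 : 0 < ‖x‖ := by linarith
  set R := |(x 0 : ℝ)| * |τ| + |(x 1 : ℝ)| + 1
  have hR : 2 * R + 1 ≤ (2 * |τ| + 5) * ‖x‖ := by nlinarith [abs_nonneg τ]
  calc _ ≤ ENNReal.ofReal (2 * R + 1) * ENNReal.ofReal (2 * ε / ‖x‖ ^ g) :=
        tsum_int_le_of_support_bounded (by positivity)
          (fun m => volume_approxSet_le hx hg hε hx0 (norm_le_tripleNorm m x))
          (fun m hm => abs_le_of_mem_approxSet hx hg hε1 (nonempty_of_measure_ne_zero hm).some_mem)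
    _ = ENNReal.ofReal ((2 * R + 1) * (2 * ε / ‖x‖ ^ g)) :=
        (ENNReal.ofReal_mul (by positivity)).symm
    _ ≤ _ := by
      apply ENNReal.ofReal_le_ofReal
      calc (2 * R + 1) * (2 * ε / ‖x‖ ^ g) ≤ (2 * |τ| + 5) * ‖x‖ * (2 * ε / ‖x‖ ^ g) := by gcongr
        _ = _ := by rw [Real.rpow_sub hx0, Real.rpow_one]; ring

variable (τ) in
lemma volume_badSet_le (hg : 3 < g) :
    ∃ C : ℝ, ∀ ε, 0 ≤ ε → ε ≤ 1 → volume (badSet τ g ε) ≤ ENNReal.ofReal (C * ε) := by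
  have hsum : Summable fun x : Fin 2 → ℤ => ‖x‖ ^ (1 - g) := by
    simpa [neg_sub] using EisensteinSeries.summable_one_div_norm_rpow (k := g - 1) (by linarith)
  refine ⟨2 * (2 * |τ| + 5) * ∑' x : Fin 2 → ℤ, ‖x‖ ^ (1 - g), fun ε hε hε1 => ?_⟩
  have hsub : badSet τ g ε ⊆
      ⋃ x ∈ {x : Fin 2 → ℤ | x 1 ≠ 0}, ⋃ m, approxSet τ g ε m (x 0) (x 1) := by
    simp only [badSet, iUnion_subset_iff]
    intro m n p hp α hα
    simp only [mem_iUnion]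
    exact ⟨![n, p], hp, m, hα⟩
  calc volume (badSet τ g ε)
      ≤ ∑' x : {x : Fin 2 → ℤ // x 1 ≠ 0}, ∑' m, volume (approxSet τ g ε m (x.1 0) (x.1 1)) :=
        (measure_mono hsub).trans <| (measure_biUnion_le _ (to_countable _) _).trans <|
          ENNReal.tsum_le_tsum fun x => measure_iUnion_le _
    _ ≤ ∑' x : {x : Fin 2 → ℤ // x 1 ≠ 0},
          ENNReal.ofReal (2 * (2 * |τ| + 5) * ε * ‖x.1‖ ^ (1 - g)) :=
        ENNReal.tsum_le_tsum fun x => tsum_volume_approxSet_le x.2 (by linarith) hε hε1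
    _ ≤ ∑' x : Fin 2 → ℤ, ENNReal.ofReal (2 * (2 * |τ| + 5) * ε * ‖x‖ ^ (1 - g)) :=
        ENNReal.tsum_comp_le_tsum_of_injective Subtype.val_injective _
    _ = _ := by
      rw [← ENNReal.ofReal_tsum_of_nonneg (fun x => by positivity) (hsum.mul_left _),
        tsum_mul_left]
      congr 1
      ring

variable (τ) in
lemma volume_iInter_badSet_eq_zero (hg : 3 < g) : volume (⋂ ε > 0, badSet τ g ε) = 0 := by
  obtain ⟨C, hC⟩ := volume_badSet_le τ hg
  have hlim : Tendsto (fun ε => ENNReal.ofReal (C * ε)) (𝓝[>] 0) (𝓝 0) := by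
    have : Tendsto (fun ε => C * ε) (𝓝[>] 0) (𝓝 (C * 0)) :=
      ((continuous_const_mul C).tendsto 0).mono_left nhdsWithin_le_nhds
    simpa using ENNReal.tendsto_ofReal this
  refine le_antisymm (ge_of_tendsto hlim ?_) zero_le
  filter_upwards [Ioc_mem_nhdsGT one_pos] with ε hε
  exact (measure_mono (iInter₂_subset ε hε.1)).trans (hC ε hε.1.le hε.2)

lemma le_abs_of_notMem_badSet {α : ℝ} (hα : α ∈ Icc 0 1) (hbad : α ∉ badSet τ g ε)
    (hp : p ≠ 0) : ε / tripleNorm m n p ^ g ≤ |(m : ℝ) + n * τ + p * α| := by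
  by_contra! h
  exact hbad (by simp only [badSet, mem_iUnion]; exact ⟨m, n, p, hp, hα, h⟩)

lemma div_rpow_le_div_rpow {K K' t a b : ℝ} (hK : 0 ≤ K) (hKK' : K' ≤ K) (ht : 1 ≤ t)
    (hab : a ≤ b) : K' / t ^ b ≤ K / t ^ a :=
  div_le_div₀ hK hKK' (Real.rpow_pos_of_pos (by linarith) a)
    (Real.rpow_le_rpow_of_exponent_le ht hab)

end DiophantinePair

open DiophantinePair

theorem full_measure_diophantine_pairs (τ κ K₀ : ℝ) (hK₀ : 0 < K₀)
    (hτ : ∀ m n : ℤ, ¬(m = 0 ∧ n = 0) →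
      K₀ / Real.sqrt ((m : ℝ) ^ 2 + (n : ℝ) ^ 2) ^ κ ≤ |(m : ℝ) + (n : ℝ) * τ|) :
    ∃ Λ : Set ℝ, Λ ⊆ Set.Icc 0 1 ∧ volume (Set.Icc (0 : ℝ) 1 \ Λ) = 0 ∧
      ∀ α ∈ Λ, ∀ γ : ℝ, max 3 κ < γ →
        ∃ K : ℝ, 0 < K ∧ ∀ m n p : ℤ, ¬(m = 0 ∧ n = 0 ∧ p = 0) →
          K / Real.sqrt ((m : ℝ) ^ 2 + (n : ℝ) ^ 2 + (p : ℝ) ^ 2) ^ γ ≤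
            |(m : ℝ) + (n : ℝ) * τ + (p : ℝ) * α| := by
  set g : ℕ → ℝ := fun i => max 3 κ + 1 / (i + 1)
  have hg3 : ∀ i, 3 < g i := fun i => by
    have : (0 : ℝ) < 1 / (i + 1) := by positivity
    linarith [le_max_left 3 κ]
  set N := ⋃ i : ℕ, ⋂ ε > 0, badSet τ (g i) ε
  have hN : volume N = 0 := measure_iUnion_null fun i => volume_iInter_badSet_eq_zero τ (hg3 i)
  refine ⟨Icc 0 1 \ N, sdiff_subset, measure_mono_null (by simp [sdiff_sdiff_right_self]) hN, ?_⟩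
  rintro α ⟨hα, hαN⟩ γ hγ
  obtain ⟨i, hi⟩ := exists_nat_one_div_lt (sub_pos.2 hγ)
  simp only [N, mem_iUnion, mem_iInter, not_exists, not_forall] at hαN
  obtain ⟨ε, hε, hgood⟩ := hαN i
  refine ⟨min ε K₀, lt_min hε hK₀, fun m n p hv => ?_⟩
  have hv1 := one_le_tripleNorm hv
  rcases eq_or_ne p 0 with rfl | hp
  · have hmn : ¬(m = 0 ∧ n = 0) := by tauto
    have hv1' : 1 ≤ √((m : ℝ) ^ 2 + n ^ 2) := by simpa [tripleNorm] using hv1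
    simpa using (div_rpow_le_div_rpow hK₀.le (min_le_right ε K₀) hv1'
      (le_max_right 3 κ |>.trans hγ.le)).trans (hτ m n hmn)
  · exact (div_rpow_le_div_rpow hε.le (min_le_left ε K₀) hv1 (by linarith)).trans
      (le_abs_of_notMem_badSet hα hgood hp)
end
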